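/- Suppose char K = 2. Then the center of Γ is exactly the K-linear span of 1 together with the set of all elements aⁱbʲ with i ≥ 0 and j ≥ 1 (images in Γ of the corresponding words in a and b). In particular the center of Γ is isomorphic as a K-algebra to K ⊕ K[a,b]b, where b has degree 1 and ab has degree 2. -/

import Mathlib

set_option synthInstance.maxHeartbeats 1000000
set_option maxHeartbeats 1000000

variable (K : Type*) [Field K]

/-- Relations defining `Γ = KQ/(ab + ba, bc)` (the Koszul dual situation):
generators `e = ι 0`, `a = ι 1`, `b = ι 2`, `c = ι 3`, with the path algebra
relations for the quiver with two vertices, loops `a, b` at vertex 1 and an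
arrow `c`, together with `ab + ba = 0` and `bc = 0`. -/
inductive Grel : FreeAlgebra K (Fin 4) → FreeAlgebra K (Fin 4) → Prop
  | ee : Grel (FreeAlgebra.ι K 0 * FreeAlgebra.ι K 0) (FreeAlgebra.ι K 0)
  | ea : Grel (FreeAlgebra.ι K 0 * FreeAlgebra.ι K 1) (FreeAlgebra.ι K 1)
  | ae : Grel (FreeAlgebra.ι K 1 * FreeAlgebra.ι K 0) (FreeAlgebra.ι K 1)
  | eb : Grel (FreeAlgebra.ι K 0 * FreeAlgebra.ι K 2) (FreeAlgebra.ι K 2)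
  | be : Grel (FreeAlgebra.ι K 2 * FreeAlgebra.ι K 0) (FreeAlgebra.ι K 2)
  | ec : Grel (FreeAlgebra.ι K 0 * FreeAlgebra.ι K 3) (FreeAlgebra.ι K 3)
  | ce : Grel (FreeAlgebra.ι K 3 * FreeAlgebra.ι K 0) 0
  | abba : Grel (FreeAlgebra.ι K 1 * FreeAlgebra.ι K 2 + FreeAlgebra.ι K 2 * FreeAlgebra.ι K 1) 0
  | bc : Grel (FreeAlgebra.ι K 2 * FreeAlgebra.ι K 3) 0

/-- The algebra `Γ` (whose center computes `Z_gr(E(𝒜)) ≅ HH*(𝒜)/𝒩`). -/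
abbrev Galg := RingQuot (Grel K)

noncomputable def eG : Galg K := RingQuot.mkAlgHom K (Grel K) (FreeAlgebra.ι K 0)
noncomputable def aG : Galg K := RingQuot.mkAlgHom K (Grel K) (FreeAlgebra.ι K 1)
noncomputable def bG : Galg K := RingQuot.mkAlgHom K (Grel K) (FreeAlgebra.ι K 2)
noncomputable def cG : Galg K := RingQuot.mkAlgHom K (Grel K) (FreeAlgebra.ι K 3)

/-- The substitution `y ↦ 0` on `K[x,y]` (with `x = X 0`, `y = X 1`). -/
noncomputable def substY0 : MvPolynomial (Fin 2) K →ₐ[K] MvPolynomial (Fin 2) K :=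
  MvPolynomial.aeval (fun i => if i = 0 then MvPolynomial.X 0 else 0)

/-- The subalgebra `R = { f ∈ K[x,y] : f(x,0) is a constant } = K·1 + y·K[x,y]`
of the polynomial ring `K[x,y]`. -/
noncomputable def Rsub : Subalgebra K (MvPolynomial (Fin 2) K) :=
  Subalgebra.comap (substY0 K) ⊥


/-!
In characteristic 2 the loops `a` and `b` commute, so `p ↦ p(a, b)` is an algebra map
`K[x,y] → Γ`, and every element of `Γ` has the form `α (1 - e) + e p(a,b) + q(a,b) c`; these
normal forms multiply by an explicit rule. Commuting a normal form with `e` and with `c` forces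
`q(a,b) c = 0` and `p(x,0) = α`, and by the product rule these conditions make it central.
To read `p(x,0)` off `p(a,b) c` one uses the representation `e ↦ E₁₁`, `a ↦ x E₁₁`, `b ↦ 0`,
`c ↦ E₁₂` of `Γ` by `2 × 2` matrices over `K[x,y]`. The algebra map `Γ → K[x,y]` with `e ↦ 1`,
`c ↦ 0` sends such a central element to `p`, which identifies the center with
`{p | p(x,0) ∈ K}`.
-/

open MvPolynomial

namespace MvPolynomial

variable {R A σ : Type*} [CommSemiring R] [Semiring A] [Algebra R A]

open scoped IsMulCommutative in
noncomputable def aevalOfCommute (v : σ → A) (hv : ∀ i j, Commute (v i) (v j)) :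
    MvPolynomial σ R →ₐ[R] A :=
  have := Algebra.isMulCommutative_adjoin R (s := Set.range v) (by
    rintro _ ⟨i, rfl⟩ _ ⟨j, rfl⟩
    exact hv i j)
  (Algebra.adjoin R (Set.range v)).val.comp
    (aeval fun i => ⟨v i, Algebra.subset_adjoin (Set.mem_range_self i)⟩)

@[simp]
theorem aevalOfCommute_X (v : σ → A) (hv : ∀ i j, Commute (v i) (v j)) (i : σ) :
    aevalOfCommute (R := R) v hv (X i) = v i := by
  simp [aevalOfCommute]

theorem commute_aevalOfCommute (v : σ → A) (hv : ∀ i j, Commute (v i) (v j)) {x : A}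
    (hx : ∀ i, Commute x (v i)) (p : MvPolynomial σ R) : Commute x (aevalOfCommute v hv p) := by
  induction p using MvPolynomial.induction_on with
  | C r => simpa using Algebra.commute_algebraMap_right r x
  | add p q hp hq => simpa using hp.add_right hq
  | mul_X p i hp => simpa using hp.mul_right (hx i)

end MvPolynomial

theorem neg_eq_self_of_charTwo {F M : Type*} [Ring F] [CharP F 2] [AddCommGroup M] [Module F M]
    (x : M) : -x = x := by
  rw [neg_eq_iff_add_eq_zero, ← two_smul F x, CharTwo.two_eq_zero, zero_smul]

theorem substY0_X_zero : substY0 K (X 0) = X 0 := by simp [substY0]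

theorem substY0_X_one : substY0 K (X 1) = 0 := by simp [substY0]

theorem substY0_monomial (d : Fin 2 →₀ ℕ) (r : K) :
    substY0 K (monomial d r) = if d 1 = 0 then monomial d r else 0 := by
  rw [monomial_eq, Finsupp.prod_fintype _ _ (fun _ => pow_zero _), Fin.prod_univ_two]
  split_ifs with h <;> simp [substY0, h]

theorem mem_Rsub_iff (p : MvPolynomial (Fin 2) K) : p ∈ Rsub K ↔ ∃ α, substY0 K p = C α := by
  simp [Rsub, Algebra.mem_bot, eq_comm]

theorem eG_mul_eG : eG K * eG K = eG K :=
  (map_mul _ _ _).symm.trans (RingQuot.mkAlgHom_rel K Grel.ee)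

theorem eG_mul_aG : eG K * aG K = aG K :=
  (map_mul _ _ _).symm.trans (RingQuot.mkAlgHom_rel K Grel.ea)

theorem aG_mul_eG : aG K * eG K = aG K :=
  (map_mul _ _ _).symm.trans (RingQuot.mkAlgHom_rel K Grel.ae)

theorem eG_mul_bG : eG K * bG K = bG K :=
  (map_mul _ _ _).symm.trans (RingQuot.mkAlgHom_rel K Grel.eb)

theorem bG_mul_eG : bG K * eG K = bG K :=
  (map_mul _ _ _).symm.trans (RingQuot.mkAlgHom_rel K Grel.be)

theorem eG_mul_cG : eG K * cG K = cG K :=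
  (map_mul _ _ _).symm.trans (RingQuot.mkAlgHom_rel K Grel.ec)

theorem cG_mul_eG : cG K * eG K = 0 :=
  ((map_mul _ _ _).symm.trans (RingQuot.mkAlgHom_rel K Grel.ce)).trans (map_zero _)

theorem aG_mul_bG_add_bG_mul_aG : aG K * bG K + bG K * aG K = 0 := by
  have := RingQuot.mkAlgHom_rel K (Grel.abba (K := K))
  rwa [map_add, map_mul, map_mul, map_zero] at this

theorem bG_mul_cG : bG K * cG K = 0 :=
  ((map_mul _ _ _).symm.trans (RingQuot.mkAlgHom_rel K Grel.bc)).trans (map_zero _)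

theorem commute_eG_aG : Commute (eG K) (aG K) :=
  (eG_mul_aG K).trans (aG_mul_eG K).symm

theorem commute_eG_bG : Commute (eG K) (bG K) :=
  (eG_mul_bG K).trans (bG_mul_eG K).symm

theorem eG_mul_aG_pow_mul_bG_pow (i : ℕ) {j : ℕ} (hj : 1 ≤ j) :
    eG K * (aG K ^ i * bG K ^ j) = aG K ^ i * bG K ^ j := by
  rw [← mul_assoc, ((commute_eG_aG K).pow_right i).eq, mul_assoc, ← Nat.sub_add_cancel hj,
    pow_succ', ← mul_assoc (eG K), eG_mul_bG]

theorem Galg.induction_on {P : Galg K → Prop} (g : Galg K)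
    (algebraMap : ∀ r : K, P (algebraMap K (Galg K) r))
    (add : ∀ x y, P x → P y → P (x + y)) (mul : ∀ x y, P x → P y → P (x * y))
    (eG : P (eG K)) (aG : P (aG K)) (bG : P (bG K)) (cG : P (cG K)) : P g := by
  obtain ⟨x, rfl⟩ := RingQuot.mkAlgHom_surjective K (Grel K) g
  induction x using FreeAlgebra.induction with
  | grade0 r => simpa only [AlgHom.commutes] using algebraMap r
  | grade1 i => fin_cases i <;> assumption
  | mul x y hx hy => simpa only [map_mul] using mul _ _ hx hy
  | add x y hx hy => simpa only [map_add] using add _ _ hx hy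

noncomputable def toMatrix : Galg K →ₐ[K] Matrix (Fin 2) (Fin 2) (MvPolynomial (Fin 2) K) :=
  RingQuot.liftAlgHom K ⟨FreeAlgebra.lift K
      ![Matrix.single 0 0 1, Matrix.single 0 0 (X 0), 0, Matrix.single 0 1 1],
    by rintro _ _ ⟨⟩ <;> simp⟩

theorem toMatrix_aG : toMatrix K (aG K) = Matrix.single 0 0 (X 0) := by simp [toMatrix, aG]

theorem toMatrix_bG : toMatrix K (bG K) = 0 := by simp [toMatrix, bG]

theorem toMatrix_cG : toMatrix K (cG K) = Matrix.single 0 1 1 := by simp [toMatrix, cG]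

section CharTwo

variable [CharP K 2]

theorem commute_aG_bG : Commute (aG K) (bG K) := by
  rw [Commute, SemiconjBy, eq_neg_of_add_eq_zero_left (aG_mul_bG_add_bG_mul_aG K),
    neg_eq_self_of_charTwo (F := K)]

noncomputable def evalAB : MvPolynomial (Fin 2) K →ₐ[K] Galg K :=
  aevalOfCommute ![aG K, bG K] fun i j => by
    fin_cases i <;> fin_cases j <;> simp [commute_aG_bG, (commute_aG_bG K).symm]

@[simp]
theorem evalAB_X_zero : evalAB K (X 0) = aG K := aevalOfCommute_X _ _ 0

@[simp]
theorem evalAB_X_one : evalAB K (X 1) = bG K := aevalOfCommute_X _ _ 1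

theorem evalAB_C (α : K) : evalAB K (C α) = algebraMap K (Galg K) α := (evalAB K).commutes α

theorem evalAB_monomial (d : Fin 2 →₀ ℕ) (r : K) :
    evalAB K (monomial d r) = r • (aG K ^ d 0 * bG K ^ d 1) := by
  rw [monomial_eq, Finsupp.prod_fintype _ _ (fun _ => pow_zero _), Fin.prod_univ_two]
  simp [Algebra.smul_def]

theorem commute_eG_evalAB (p : MvPolynomial (Fin 2) K) : Commute (eG K) (evalAB K p) :=
  commute_aevalOfCommute _ _ (fun i => by fin_cases i; exacts [commute_eG_aG K, commute_eG_bG K]) p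

theorem commute_aG_evalAB (p : MvPolynomial (Fin 2) K) : Commute (aG K) (evalAB K p) :=
  commute_aevalOfCommute _ _ (fun i => by fin_cases i; exacts [.refl _, commute_aG_bG K]) p

theorem evalAB_mul_cG (p : MvPolynomial (Fin 2) K) :
    evalAB K p * cG K = evalAB K (substY0 K p) * cG K := by
  induction p using MvPolynomial.induction_on with
  | C r => simp only [← algebraMap_eq, AlgHom.commutes]
  | add p q hp hq => simp only [map_add, add_mul, hp, hq]
  | mul_X p i hp =>
    match i with
    | 0 =>
      simp only [map_mul, substY0_X_zero, evalAB_X_zero, mul_assoc]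
      rw [← mul_assoc, ← mul_assoc, ← (commute_aG_evalAB K p).eq, ← (commute_aG_evalAB K _).eq,
        mul_assoc, mul_assoc, hp]
    | 1 => simp [mul_assoc, bG_mul_cG, substY0_X_one]

theorem toMatrix_evalAB_zero_zero (p : MvPolynomial (Fin 2) K) :
    toMatrix K (evalAB K p) 0 0 = substY0 K p := by
  induction p using MvPolynomial.induction_on with
  | C r => simp [← algebraMap_eq, Matrix.algebraMap_matrix_apply]
  | add p q hp hq => simp [hp, hq]
  | mul_X p i hp =>
    fin_cases i <;> simp [Matrix.mul_apply, Fin.sum_univ_two, toMatrix_aG, toMatrix_bG, hp,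
      substY0_X_zero, substY0_X_one]

theorem substY0_eq_of_evalAB_mul_cG_eq {p q : MvPolynomial (Fin 2) K}
    (h : evalAB K p * cG K = evalAB K q * cG K) : substY0 K p = substY0 K q := by
  have := congr_arg (fun g => toMatrix K g 0 1) h
  simpa [toMatrix_cG, Matrix.mul_apply, Fin.sum_univ_two, toMatrix_evalAB_zero_zero] using this

noncomputable def toPoly : Galg K →ₐ[K] MvPolynomial (Fin 2) K :=
  RingQuot.liftAlgHom K ⟨FreeAlgebra.lift K ![1, X 0, X 1, 0], by
    rintro _ _ ⟨⟩ <;> simp [mul_comm (X 1 : MvPolynomial (Fin 2) K), CharTwo.add_self_eq_zero]⟩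

@[simp]
theorem toPoly_eG : toPoly K (eG K) = 1 := by simp [toPoly, eG]

@[simp]
theorem toPoly_cG : toPoly K (cG K) = 0 := by simp [toPoly, cG]

@[simp]
theorem toPoly_evalAB (p : MvPolynomial (Fin 2) K) : toPoly K (evalAB K p) = p := by
  have : (toPoly K).comp (evalAB K) = AlgHom.id K _ := by
    ext i
    fin_cases i <;> simp [toPoly, aG, bG]
  exact AlgHom.congr_fun this p

noncomputable def normalForm (α : K) (p q : MvPolynomial (Fin 2) K) : Galg K :=
  α • (1 - eG K) + eG K * evalAB K p + evalAB K q * cG K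

theorem toPoly_normalForm (α : K) (p q : MvPolynomial (Fin 2) K) :
    toPoly K (normalForm K α p q) = p := by
  simp [normalForm]

theorem eG_eq_normalForm : eG K = normalForm K 0 1 0 := by simp [normalForm]

theorem cG_eq_normalForm : cG K = normalForm K 0 0 1 := by simp [normalForm]

theorem normalForm_add (α β : K) (p q p' q' : MvPolynomial (Fin 2) K) :
    normalForm K α p q + normalForm K β p' q' = normalForm K (α + β) (p + p') (q + q') := by
  simp only [normalForm, add_smul, map_add, mul_add, add_mul]
  abel

theorem normalForm_mul_normalForm (α β : K) (p q p' q' : MvPolynomial (Fin 2) K) :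
    normalForm K α p q * normalForm K β p' q' =
      normalForm K (α * β) (p * p') (β • q + p * q') := by
  have hce (x : Galg K) : cG K * (eG K * x) = 0 := by rw [← mul_assoc, cG_mul_eG, zero_mul]
  have hep (r) : eG K * evalAB K r = evalAB K r * eG K := commute_eG_evalAB K r
  have hepx (r) (x : Galg K) : eG K * (evalAB K r * x) = evalAB K r * (eG K * x) := by
    rw [← mul_assoc, hep, mul_assoc]
  have hppx (r r') (x : Galg K) : evalAB K r * (evalAB K r' * x) = evalAB K (r * r') * x := by
    rw [map_mul, mul_assoc]
  have hcpc (r) : cG K * (evalAB K r * cG K) = 0 := by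
    rw [← hce (evalAB K r * cG K), hepx, eG_mul_cG]
  have hcpe (r) : cG K * (evalAB K r * eG K) = 0 := by rw [← hep, hce]
  simp only [normalForm, add_mul, mul_add, sub_mul, mul_sub, smul_mul_assoc, mul_smul_comm, one_mul,
    mul_one, map_add, map_smul, mul_assoc, eG_mul_eG, eG_mul_cG, cG_mul_eG, hep, hepx, hppx, hcpc,
    hcpe, mul_zero, sub_self, smul_zero, add_zero]
  module

theorem exists_normalForm (g : Galg K) : ∃ α p q, g = normalForm K α p q := by
  induction g using Galg.induction_on with
  | algebraMap r =>
    refine ⟨r, C r, 0, ?_⟩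
    rw [normalForm, evalAB_C, ← Algebra.commutes, ← Algebra.smul_def, map_zero, zero_mul,
      add_zero, smul_sub, sub_add_cancel, Algebra.algebraMap_eq_smul_one]
  | add x y hx hy =>
    obtain ⟨α, p, q, rfl⟩ := hx
    obtain ⟨β, p', q', rfl⟩ := hy
    exact ⟨_, _, _, normalForm_add K α β p q p' q'⟩
  | mul x y hx hy =>
    obtain ⟨α, p, q, rfl⟩ := hx
    obtain ⟨β, p', q', rfl⟩ := hy
    exact ⟨_, _, _, normalForm_mul_normalForm K α β p q p' q'⟩
  | eG => exact ⟨0, 1, 0, eG_eq_normalForm K⟩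
  | aG => exact ⟨0, X 0, 0, by simp [normalForm, eG_mul_aG]⟩
  | bG => exact ⟨0, X 1, 0, by simp [normalForm, eG_mul_bG]⟩
  | cG => exact ⟨0, 0, 1, cG_eq_normalForm K⟩

theorem mem_center_iff_exists_normalForm (z : Galg K) :
    z ∈ Subalgebra.center K (Galg K) ↔ ∃ α p, substY0 K p = C α ∧ z = normalForm K α p 0 := by
  rw [Subalgebra.mem_center_iff]
  constructor
  · obtain ⟨α, p, q, rfl⟩ := exists_normalForm K z
    intro hz
    have he := hz (eG K)
    have hc := hz (cG K)
    rw [eG_eq_normalForm, normalForm_mul_normalForm, normalForm_mul_normalForm] at he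
    rw [cG_eq_normalForm, normalForm_mul_normalForm, normalForm_mul_normalForm] at hc
    simp only [normalForm, smul_zero, zero_smul, add_zero, zero_add, mul_zero, mul_one, one_mul,
      map_zero, map_one, zero_mul, map_smul, smul_mul_assoc, add_eq_left] at he hc
    refine ⟨α, p, ?_, by rw [normalForm, normalForm, he, map_zero, zero_mul]⟩
    have hcα : evalAB K p * cG K = evalAB K (C α) * cG K := by
      rw [← hc, evalAB_C, Algebra.smul_def]
    simpa [← algebraMap_eq] using substY0_eq_of_evalAB_mul_cG_eq K hcα
  · rintro ⟨α, p, hp, rfl⟩ g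
    obtain ⟨β, r, s, rfl⟩ := exists_normalForm K g
    have hs : evalAB K (α • s) * cG K = evalAB K (p * s) * cG K := by
      rw [evalAB_mul_cG, evalAB_mul_cG K (p * s), map_mul, hp, C_mul', map_smul]
    rw [normalForm_mul_normalForm, normalForm_mul_normalForm, mul_comm β, mul_comm r]
    simp only [normalForm, mul_zero, smul_zero, add_zero, zero_add, hs]

theorem eG_mul_evalAB_sub_substY0_mem_span (p : MvPolynomial (Fin 2) K) :
    eG K * evalAB K (p - substY0 K p) ∈
      Submodule.span K {z | ∃ i j : ℕ, 1 ≤ j ∧ z = aG K ^ i * bG K ^ j} := by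
  induction p using MvPolynomial.induction_on' with
  | monomial d r =>
    rw [substY0_monomial]
    split_ifs with h
    · simp
    · rw [sub_zero, evalAB_monomial, mul_smul_comm, eG_mul_aG_pow_mul_bG_pow K _ (by omega)]
      exact Submodule.smul_mem _ _ (Submodule.subset_span ⟨d 0, d 1, by omega, rfl⟩)
  | add p q hp hq =>
    rw [map_add, add_sub_add_comm, map_add, mul_add]
    exact add_mem hp hq

theorem toSubmodule_center_eq_span :
    Subalgebra.toSubmodule (Subalgebra.center K (Galg K)) =
      Submodule.span K ({1} ∪ {z | ∃ i j : ℕ, 1 ≤ j ∧ z = aG K ^ i * bG K ^ j}) := by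
  apply le_antisymm
  · intro z hz
    obtain ⟨α, p, hp, rfl⟩ := (mem_center_iff_exists_normalForm K z).1 hz
    have hform : normalForm K α p 0 = α • 1 + eG K * evalAB K (p - substY0 K p) := by
      rw [normalForm, hp, map_sub, mul_sub, evalAB_C, ← Algebra.commutes, ← Algebra.smul_def,
        map_zero, zero_mul, add_zero, smul_sub]
      abel
    rw [hform]
    exact add_mem (Submodule.smul_mem _ _ (Submodule.subset_span (Or.inl rfl)))
      (Submodule.span_mono Set.subset_union_right (eG_mul_evalAB_sub_substY0_mem_span K p))
  · rw [Submodule.span_le]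
    rintro _ (rfl | ⟨i, j, hj, rfl⟩)
    · exact (Subalgebra.center K (Galg K)).one_mem
    · refine (mem_center_iff_exists_normalForm K _).2 ⟨0, X 0 ^ i * X 1 ^ j, ?_, ?_⟩
      · simp [substY0_X_one, zero_pow (by omega : j ≠ 0)]
      · simp [normalForm, eG_mul_aG_pow_mul_bG_pow K i hj]

theorem injective_toPoly_comp_val_center :
    Function.Injective ((toPoly K).comp (Subalgebra.center K (Galg K)).val) := by
  rintro ⟨_, hz⟩ ⟨_, hz'⟩ h
  obtain ⟨α, p, hp, rfl⟩ := (mem_center_iff_exists_normalForm K _).1 hz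
  obtain ⟨β, q, hq, rfl⟩ := (mem_center_iff_exists_normalForm K _).1 hz'
  simp only [AlgHom.comp_apply, Subalgebra.coe_val, toPoly_normalForm] at h
  subst h
  obtain rfl := (C_inj _ _ _).1 (hp.symm.trans hq)
  rfl

theorem range_toPoly_comp_val_center :
    ((toPoly K).comp (Subalgebra.center K (Galg K)).val).range = Rsub K := by
  ext p
  rw [AlgHom.range_comp, Subalgebra.range_val, Subalgebra.mem_map, mem_Rsub_iff]
  constructor
  · rintro ⟨z, hz, rfl⟩
    obtain ⟨α, p, hp, rfl⟩ := (mem_center_iff_exists_normalForm K z).1 hz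
    exact ⟨α, by rwa [toPoly_normalForm]⟩
  · rintro ⟨α, hp⟩
    exact ⟨_, (mem_center_iff_exists_normalForm K _).2 ⟨α, p, hp, rfl⟩, toPoly_normalForm K α p 0⟩

noncomputable def centerAlgEquivRsub : Subalgebra.center K (Galg K) ≃ₐ[K] Rsub K :=
  (AlgEquiv.ofInjective _ (injective_toPoly_comp_val_center K)).trans
    (Subalgebra.equivOfEq _ _ (range_toPoly_comp_val_center K))

end CharTwo

/-- If `char K = 2`, the center of `Γ` is exactly the `K`-linear span of `1` together
with all elements `aⁱbʲ` with `i ≥ 0`, `j ≥ 1`; in particular it is isomorphic as a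
`K`-algebra to `K ⊕ K[a,b]b` (the subalgebra of a polynomial ring in two variables
consisting of the polynomials that are constant after setting the second variable to
zero). -/
theorem center_eq_of_char_two (K : Type*) [Field K] [CharP K 2] :
    Subalgebra.toSubmodule (Subalgebra.center K (Galg K)) =
      Submodule.span K ({1} ∪ {z | ∃ i j : ℕ, 1 ≤ j ∧ z = aG K ^ i * bG K ^ j}) ∧
    Nonempty ((Subalgebra.center K (Galg K)) ≃ₐ[K] Rsub K) :=
  ⟨toSubmodule_center_eq_span K, ⟨centerAlgEquivRsub K⟩⟩
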